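/- arXiv:1610.00300 — 2 statements merged into one kernel-verified Lean document; each statement's English description precedes it below -/
import Mathlib

section
/- Given a finite collection Q of n pairs of points (aᵢ, bᵢ) with all 2n points distinct, and a halfplane h* maximizing |h ∩ P| over all halfplanes h containing at most one point from each pair, define a coloring C* that colors red every point of h* ∩ P, colors blue the partner of every point of h* ∩ P, and arbitrarily colors one point red and one blue in each pair disjoint from h*. Then C* is a valid coloring and η(C*) = |h* ∩ P|, and C* maximizes η over all valid colorings. -/
open scoped Classical

/-- A (closed or open) halfplane in `ℝ²`. -/
def IsHalfplane (h : Set (ℝ × ℝ)) : Prop :=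
  ∃ (u : ℝ × ℝ) (c : ℝ), u ≠ 0 ∧
    (h = {x : ℝ × ℝ | u.1 * x.1 + u.2 * x.2 ≤ c} ∨
     h = {x : ℝ × ℝ | u.1 * x.1 + u.2 * x.2 < c})

/-- A coloring (`true` = red, `false` = blue) is valid for the pairs `Q` if each pair
gets exactly one red and one blue point. -/
def ValidColoring {n : ℕ} (Q : Fin n → (ℝ × ℝ) × (ℝ × ℝ)) (C : ℝ × ℝ → Bool) : Prop :=
  ∀ i : Fin n, C (Q i).1 ≠ C (Q i).2

/-- `h` contains no blue point of `P` under coloring `C`. -/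
def NoBlue (P : Finset (ℝ × ℝ)) (C : ℝ × ℝ → Bool) (h : Set (ℝ × ℝ)) : Prop :=
  ∀ p ∈ P, C p = false → p ∉ h

/-- Number of red points of `P` (under coloring `C`) lying in `h`. -/
noncomputable def redCount (P : Finset (ℝ × ℝ)) (C : ℝ × ℝ → Bool) (h : Set (ℝ × ℝ)) : ℕ :=
  (P.filter (fun p => p ∈ h ∧ C p = true)).card

theorem stmt5 (n : ℕ) (Q : Fin n → (ℝ × ℝ) × (ℝ × ℝ))
    (hdist : Function.Injective
      (fun ib : Fin n × Bool => if ib.2 then (Q ib.1).1 else (Q ib.1).2))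
    (P : Finset (ℝ × ℝ))
    (hP : P = Finset.image
      (fun ib : Fin n × Bool => if ib.2 then (Q ib.1).1 else (Q ib.1).2) Finset.univ)
    (hstar : Set (ℝ × ℝ)) (hhs : IsHalfplane hstar)
    -- `hstar` contains at most one point from each pair
    (hone : ∀ i : Fin n, ¬((Q i).1 ∈ hstar ∧ (Q i).2 ∈ hstar))
    -- `hstar` maximizes the number of contained points of `P` among such halfplanes
    (hopt : ∀ h : Set (ℝ × ℝ), IsHalfplane h →
      (∀ i : Fin n, ¬((Q i).1 ∈ h ∧ (Q i).2 ∈ h)) →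
      (P.filter (fun p => p ∈ h)).card ≤ (P.filter (fun p => p ∈ hstar)).card)
    (C : ℝ × ℝ → Bool)
    -- `C` colors red every point of `hstar ∩ P` and blue its partner
    (hC1 : ∀ i : Fin n, (Q i).1 ∈ hstar → C (Q i).1 = true ∧ C (Q i).2 = false)
    (hC2 : ∀ i : Fin n, (Q i).2 ∈ hstar → C (Q i).2 = true ∧ C (Q i).1 = false)
    -- `C` colors arbitrarily (one red, one blue) the pairs disjoint from `hstar`
    (hC3 : ∀ i : Fin n, (Q i).1 ∉ hstar → (Q i).2 ∉ hstar → C (Q i).1 ≠ C (Q i).2) :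
    ValidColoring Q C ∧
    -- η(C) = |hstar ∩ P| :
    NoBlue P C hstar ∧ redCount P C hstar = (P.filter (fun p => p ∈ hstar)).card ∧
    (∀ h : Set (ℝ × ℝ), IsHalfplane h → NoBlue P C h →
      redCount P C h ≤ (P.filter (fun p => p ∈ hstar)).card) ∧
    -- `C` maximizes η over all valid colorings:
    (∀ C' : ℝ × ℝ → Bool, ValidColoring Q C' →
      ∀ h : Set (ℝ × ℝ), IsHalfplane h → NoBlue P C' h →
        redCount P C' h ≤ (P.filter (fun p => p ∈ hstar)).card) := by
  have hmemP : ∀ i : Fin n, (Q i).1 ∈ P ∧ (Q i).2 ∈ P := by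
    intro i
    constructor
    · rw [hP]; exact Finset.mem_image.2 ⟨(i, true), Finset.mem_univ _, rfl⟩
    · rw [hP]; exact Finset.mem_image.2 ⟨(i, false), Finset.mem_univ _, rfl⟩
  have hmem : ∀ p ∈ P, ∃ i : Fin n, p = (Q i).1 ∨ p = (Q i).2 := by
    intro p hp
    rw [hP] at hp
    simp only [Finset.mem_image, Finset.mem_univ, true_and] at hp
    obtain ⟨⟨i, b⟩, hb⟩ := hp
    cases b
    · exact ⟨i, Or.inr hb.symm⟩
    · exact ⟨i, Or.inl hb.symm⟩
  have hvalid : ValidColoring Q C := by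
    intro i
    by_cases h1 : (Q i).1 ∈ hstar
    · obtain ⟨a, b⟩ := hC1 i h1; rw [a, b]; simp
    · by_cases h2 : (Q i).2 ∈ hstar
      · obtain ⟨a, b⟩ := hC2 i h2; rw [a, b]; simp
      · exact hC3 i h1 h2
  have hredstar : ∀ p ∈ P, p ∈ hstar → C p = true := by
    intro p hp hps
    obtain ⟨i, hi | hi⟩ := hmem p hp
    · subst hi; exact (hC1 i hps).1
    · subst hi; exact (hC2 i hps).1
  have hnb : NoBlue P C hstar := by
    intro p hp hc hph
    rw [hredstar p hp hph] at hc; simp at hc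
  have hred : redCount P C hstar = (P.filter (fun p => p ∈ hstar)).card := by
    unfold redCount
    congr 1
    apply Finset.filter_congr
    intro p hp
    constructor
    · exact fun h => h.1
    · exact fun h => ⟨h, hredstar p hp h⟩
  have hmain : ∀ C' : ℝ × ℝ → Bool, ValidColoring Q C' →
      ∀ h : Set (ℝ × ℝ), IsHalfplane h → NoBlue P C' h →
        redCount P C' h ≤ (P.filter (fun p => p ∈ hstar)).card := by
    intro C' hv h hh hnb'
    have hone' : ∀ i : Fin n, ¬((Q i).1 ∈ h ∧ (Q i).2 ∈ h) := by
      rintro i ⟨h1, h2⟩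
      obtain ⟨hp1, hp2⟩ := hmemP i
      cases hb : C' (Q i).1
      · exact hnb' _ hp1 hb h1
      · have hb2 : C' (Q i).2 = false := by
          have := hv i
          cases hc : C' (Q i).2
          · rfl
          · rw [hb, hc] at this; exact absurd rfl this
        exact hnb' _ hp2 hb2 h2
    calc redCount P C' h ≤ (P.filter (fun p => p ∈ h)).card := by
          apply Finset.card_le_card
          intro p hp
          simp only [Finset.mem_filter] at hp ⊢
          exact ⟨hp.1, hp.2.1⟩
      _ ≤ (P.filter (fun p => p ∈ hstar)).card := hopt h hh hone'
  exact ⟨hvalid, hnb, hred, fun h hh hn => hmain C hvalid h hh hn, hmain⟩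
end

section
/- If there is a halfplane h containing at most one point from each pair of Q and containing k points of P, then there is a valid coloring C with η(C) ≥ k. Conversely, if there is a valid coloring C with η(C) ≥ k, then there is a halfplane containing at most one point of each pair and at least k points of P. Hence max over valid colorings of η(C) equals the maximum, over halfplanes containing at most one point per pair, of the number of points of P contained. -/
open scoped Classical

/-- `h` contains at most one point of each pair of `Q`. -/
def AtMostOnePerPair {n : ℕ} (Q : Fin n → (ℝ × ℝ) × (ℝ × ℝ)) (h : Set (ℝ × ℝ)) : Prop :=
  ∀ i : Fin n, ¬((Q i).1 ∈ h ∧ (Q i).2 ∈ h)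

theorem stmt6 (n : ℕ) (Q : Fin n → (ℝ × ℝ) × (ℝ × ℝ))
    (hdist : Function.Injective
      (fun ib : Fin n × Bool => if ib.2 then (Q ib.1).1 else (Q ib.1).2))
    (P : Finset (ℝ × ℝ))
    (hP : P = Finset.image
      (fun ib : Fin n × Bool => if ib.2 then (Q ib.1).1 else (Q ib.1).2) Finset.univ) :
    -- a halfplane with at most one point per pair containing `k` points of `P`
    -- yields a valid coloring `C` with `η(C) ≥ k`
    (∀ (k : ℕ) (h : Set (ℝ × ℝ)), IsHalfplane h → AtMostOnePerPair Q h →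
      (P.filter (fun p => p ∈ h)).card = k →
      ∃ C : ℝ × ℝ → Bool, ValidColoring Q C ∧
        ∃ h' : Set (ℝ × ℝ), IsHalfplane h' ∧ NoBlue P C h' ∧ k ≤ redCount P C h') ∧
    -- conversely, a valid coloring `C` with `η(C) ≥ k` yields such a halfplane
    (∀ (k : ℕ) (C : ℝ × ℝ → Bool), ValidColoring Q C →
      (∃ h : Set (ℝ × ℝ), IsHalfplane h ∧ NoBlue P C h ∧ k ≤ redCount P C h) →
      ∃ h' : Set (ℝ × ℝ), IsHalfplane h' ∧ AtMostOnePerPair Q h' ∧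
        k ≤ (P.filter (fun p => p ∈ h')).card) ∧
    -- hence the two maxima agree
    sSup {k : ℕ | ∃ (C : ℝ × ℝ → Bool) (h : Set (ℝ × ℝ)), ValidColoring Q C ∧
        IsHalfplane h ∧ NoBlue P C h ∧ redCount P C h = k} =
    sSup {k : ℕ | ∃ h : Set (ℝ × ℝ), IsHalfplane h ∧ AtMostOnePerPair Q h ∧
        (P.filter (fun p => p ∈ h)).card = k} := by
  -- basic distinctness facts
  have hne : ∀ i j : Fin n, (Q i).2 ≠ (Q j).1 := by
    intro i j h
    have : ((i, false) : Fin n × Bool) = (j, true) := hdist (by simpa using h)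
    simp at this
  -- Part 1
  have part1 : ∀ (k : ℕ) (h : Set (ℝ × ℝ)), IsHalfplane h → AtMostOnePerPair Q h →
      (P.filter (fun p => p ∈ h)).card = k →
      ∃ C : ℝ × ℝ → Bool, ValidColoring Q C ∧
        ∃ h' : Set (ℝ × ℝ), IsHalfplane h' ∧ NoBlue P C h' ∧ k ≤ redCount P C h' := by
    intro k h hh hone hcard
    set C : ℝ × ℝ → Bool :=
      fun p => decide (p ∈ h ∨ ∃ i, p = (Q i).1 ∧ (Q i).1 ∉ h ∧ (Q i).2 ∉ h) with hCdef
    have hCtrue : ∀ p, C p = true ↔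
        (p ∈ h ∨ ∃ i, p = (Q i).1 ∧ (Q i).1 ∉ h ∧ (Q i).2 ∉ h) := by
      intro p; simp [hCdef]
    refine ⟨C, ?_, h, hh, ?_, ?_⟩
    · intro i
      by_cases h1 : (Q i).1 ∈ h <;> by_cases h2 : (Q i).2 ∈ h
      · exact absurd ⟨h1, h2⟩ (hone i)
      · have hA : C (Q i).1 = true := (hCtrue _).2 (Or.inl h1)
        have hB : C (Q i).2 = false := by
          rw [Bool.eq_false_iff]
          intro hcon
          rcases (hCtrue _).1 hcon with h' | ⟨j, hj, _, _⟩
          · exact h2 h'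
          · exact hne i j hj
        rw [hA, hB]; simp
      · have hB : C (Q i).2 = true := (hCtrue _).2 (Or.inl h2)
        have hA : C (Q i).1 = false := by
          rw [Bool.eq_false_iff]
          intro hcon
          rcases (hCtrue _).1 hcon with h' | ⟨j, hj, _, hj2⟩
          · exact h1 h'
          · have : ((i, true) : Fin n × Bool) = (j, true) := hdist (by simpa using hj)
            simp at this
            subst this
            exact hj2 h2
        rw [hA, hB]; simp
      · have hA : C (Q i).1 = true := (hCtrue _).2 (Or.inr ⟨i, rfl, h1, h2⟩)
        have hB : C (Q i).2 = false := by
          rw [Bool.eq_false_iff]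
          intro hcon
          rcases (hCtrue _).1 hcon with h' | ⟨j, hj, _, _⟩
          · exact h2 h'
          · exact hne i j hj
        rw [hA, hB]; simp
    · intro p _ hpf hph
      have : C p = true := (hCtrue _).2 (Or.inl hph)
      rw [this] at hpf; simp at hpf
    · rw [← hcard]
      apply Finset.card_le_card
      intro p hp
      rw [Finset.mem_filter] at hp ⊢
      exact ⟨hp.1, hp.2, (hCtrue _).2 (Or.inl hp.2)⟩
  -- Part 2
  have part2 : ∀ (k : ℕ) (C : ℝ × ℝ → Bool), ValidColoring Q C →
      (∃ h : Set (ℝ × ℝ), IsHalfplane h ∧ NoBlue P C h ∧ k ≤ redCount P C h) →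
      ∃ h' : Set (ℝ × ℝ), IsHalfplane h' ∧ AtMostOnePerPair Q h' ∧
        k ≤ (P.filter (fun p => p ∈ h')).card := by
    intro k C hC ⟨h, hh, hnb, hk⟩
    refine ⟨h, hh, ?_, ?_⟩
    · rintro i ⟨h1, h2⟩
      have hp1 : (Q i).1 ∈ P := by
        rw [hP]; exact Finset.mem_image.2 ⟨(i, true), Finset.mem_univ _, rfl⟩
      have hp2 : (Q i).2 ∈ P := by
        rw [hP]; exact Finset.mem_image.2 ⟨(i, false), Finset.mem_univ _, rfl⟩
      cases hb1 : C (Q i).1 with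
      | false => exact hnb _ hp1 hb1 h1
      | true =>
        have : C (Q i).2 = false := by
          have := hC i
          rw [hb1] at this
          cases hb2 : C (Q i).2 with
          | false => rfl
          | true => rw [hb2] at this; exact absurd rfl this
        exact hnb _ hp2 this h2
    · refine le_trans hk ?_
      apply Finset.card_le_card
      intro p hp
      rw [Finset.mem_filter] at hp ⊢
      exact ⟨hp.1, hp.2.1⟩
  refine ⟨part1, part2, ?_⟩
  -- Part 3
  set A := {k : ℕ | ∃ (C : ℝ × ℝ → Bool) (h : Set (ℝ × ℝ)), ValidColoring Q C ∧
      IsHalfplane h ∧ NoBlue P C h ∧ redCount P C h = k} with hA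
  set B := {k : ℕ | ∃ h : Set (ℝ × ℝ), IsHalfplane h ∧ AtMostOnePerPair Q h ∧
      (P.filter (fun p => p ∈ h)).card = k} with hB
  -- an empty halfplane
  obtain ⟨c, hc⟩ : ∃ c : ℝ, ∀ p ∈ P, c ≤ p.1 := by
    obtain ⟨c, hc⟩ := Set.Finite.bddBelow (P.image Prod.fst).finite_toSet
    refine ⟨c, fun p hp => hc ?_⟩
    simp only [Finset.coe_image, Set.mem_image, Finset.mem_coe]
    exact ⟨p, hp, rfl⟩
  set h0 : Set (ℝ × ℝ) := {x : ℝ × ℝ | (1:ℝ) * x.1 + 0 * x.2 < c} with hh0def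
  have hh0 : IsHalfplane h0 := ⟨(1, 0), c, by simp, Or.inr rfl⟩
  have hempty : ∀ p ∈ P, p ∉ h0 := by
    intro p hp hph
    have : p.1 < c := by simpa [hh0def] using hph
    exact absurd (hc p hp) (not_le.2 this)
  -- a valid coloring
  set C0 : ℝ × ℝ → Bool := fun p => decide (∃ i, p = (Q i).1) with hC0
  have hC0valid : ValidColoring Q C0 := by
    intro i
    have h1 : C0 (Q i).1 = true := by simp [hC0]; exact ⟨i, rfl⟩
    have h2 : C0 (Q i).2 = false := by
      simp only [hC0, decide_eq_false_iff_not]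
      rintro ⟨j, hj⟩
      exact hne i j hj
    rw [h1, h2]; simp
  have hAne : A.Nonempty := by
    refine ⟨redCount P C0 h0, C0, h0, hC0valid, hh0, ?_, rfl⟩
    intro p hp _ hph
    exact hempty p hp hph
  have hBne : B.Nonempty :=
    ⟨(P.filter (fun p => p ∈ h0)).card, h0, hh0,
      fun i ⟨h1, _⟩ => hempty (Q i).1 (by
        rw [hP]; exact Finset.mem_image.2 ⟨(i, true), Finset.mem_univ _, rfl⟩) h1, rfl⟩
  have hAbdd : BddAbove A := by
    refine ⟨P.card, ?_⟩
    rintro k ⟨C, h, _, _, _, hk⟩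
    rw [← hk]
    exact Finset.card_filter_le _ _
  have hBbdd : BddAbove B := by
    refine ⟨P.card, ?_⟩
    rintro k ⟨h, _, _, hk⟩
    rw [← hk]
    exact Finset.card_filter_le _ _
  apply le_antisymm
  · apply csSup_le hAne
    rintro k ⟨C, h, hC, hh, hnb, hk⟩
    obtain ⟨h', hh', hone', hk'⟩ := part2 k C hC ⟨h, hh, hnb, hk.ge⟩
    exact le_trans hk' (le_csSup hBbdd ⟨h', hh', hone', rfl⟩)
  · apply csSup_le hBne
    rintro k ⟨h, hh, hone, hk⟩
    obtain ⟨C, hC, h', hh', hnb', hk'⟩ := part1 k h hh hone hk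
    exact le_trans hk' (le_csSup hAbdd ⟨C, h', hC, hh', hnb', rfl⟩)
end
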